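/- arXiv:1710.09873 — 2 statements merged into one kernel-verified Lean document; each statement's English description precedes it below -/
import Mathlib

section
/- Let m ≥ 2, and let N, r be non-negative integers, k ≥ 2 an integer, and γ a real number. Then the number of integers n with 0 ≤ n < N such that e(γ S_α(n+r)) · conj(e(γ S_α(n))) ≠ e(γ S_{α,k}(n+r)) · conj(e(γ S_{α,k}(n))) is at most N·r/q_{k−1}. -/
noncomputable section

/-- `e x = exp(2 π i x)`. -/
def e (x : ℝ) : ℂ := Complex.exp (2 * Real.pi * Complex.I * x)

/-- Denominators of the convergents of `α = [0; 1, m, 1, m, …]`: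
`q_0 = q_1 = 1`, `q_n = m·q_{n-1} + q_{n-2}` for even `n ≥ 2`, and
`q_n = q_{n-1} + q_{n-2}` for odd `n ≥ 3`. -/
def qseq (m : ℕ) : ℕ → ℕ
  | 0 => 1
  | 1 => 1
  | n + 2 => (if n % 2 = 0 then m else 1) * qseq m (n + 1) + qseq m n

/-- `b` assigns to each natural number `n` its (unique) Ostrowski `α`-digit
sequence for `α = [0; 1, m, 1, m, …]`: `n = ∑ i, b n i · q_i`, `b n 0 = 0`,
even-indexed digits are `≤ 1`, odd-indexed digits are `≤ m`, and if a digit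
(of positive index) attains its maximal allowed value then the previous digit
vanishes. -/
def IsOstrowskiDigits (m : ℕ) (b : ℕ → ℕ →₀ ℕ) : Prop :=
  (∀ n : ℕ, ((b n).sum fun i c => c * qseq m i) = n) ∧
  (∀ n : ℕ, b n 0 = 0) ∧
  (∀ n i : ℕ, i % 2 = 0 → b n i ≤ 1) ∧
  (∀ n i : ℕ, i % 2 = 1 → b n i ≤ m) ∧
  (∀ n i : ℕ, 1 ≤ i → b n i = (if i % 2 = 0 then 1 else m) → b n (i - 1) = 0)

/-- Ostrowski sum of digits `S_α(n)`. -/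
def Sα (b : ℕ → ℕ →₀ ℕ) (n : ℕ) : ℕ := (b n).sum fun _ c => c

/-- Truncated Ostrowski sum of digits `S_{α,k}(n) = ∑_{0 ≤ i ≤ k-1} b_i(n)`. -/
def Sαk (b : ℕ → ℕ →₀ ℕ) (k n : ℕ) : ℕ := ∑ i ∈ Finset.range k, b n i

/-!
Split `n = lo(n) + hi(n)`, where `hi(n)` is the value of the Ostrowski digits of `n` in
positions `≥ k`. By uniqueness of the expansion, the digits of any `d` that vanish from position
`k` on can be glued below the high digits of `n` (a single compatibility condition at position
`k`), and the result is the expansion of `d + hi(n)`. Hence `hi(n + r) = hi(n)` forces equal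
high digits, and then the two exponential expressions agree. Otherwise `t = hi(n + r)` is a fixed
point of `hi` in `(n, n + r]`, and gluing shows that the fixed points of `hi` are
`q_{k-1}`-separated. Counting the `n < N` that lie within `r` below a point of a `Q`-separated set
gives the bound `N r / Q`.
-/

open Finset Finsupp

namespace Finsupp

lemma weight_eq_sum_range_add_weight_filter (w : ℕ → ℕ) (c : ℕ →₀ ℕ) (k : ℕ) :
    weight w c = ∑ i ∈ range k, c i * w i + weight w (c.filter (k ≤ ·)) := by
  conv_lhs => rw [← c.filter_add_filter_not (k ≤ ·)]
  rw [map_add, add_comm, weight_apply, Finsupp.sum_of_support_subset _ (s := range k)]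
  · refine congrArg (· + _) (Finset.sum_congr rfl fun i hi => ?_)
    rw [filter_apply_pos _ _ (by simpa using hi), smul_eq_mul]
  · intro i hi
    simpa [support_filter] using (mem_filter.1 hi).2
  · simp

end Finsupp

namespace Ostrowski

def maxDigit (m i : ℕ) : ℕ := if i % 2 = 0 then 1 else m

structure IsAdmissible (m : ℕ) (c : ℕ →₀ ℕ) : Prop where
  apply_zero : c 0 = 0
  le_maxDigit : ∀ i, c i ≤ maxDigit m i
  apply_pred_eq_zero : ∀ i, 1 ≤ i → c i = maxDigit m i → c (i - 1) = 0

lemma qseq_add_two (m l : ℕ) :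
    qseq m (l + 2) = maxDigit m (l + 1) * qseq m (l + 1) + qseq m l := by
  have : (l + 1) % 2 = 0 ↔ ¬ l % 2 = 0 := by omega
  simp only [qseq, maxDigit, this, ite_not]

lemma qseq_pos (m : ℕ) : ∀ j, 0 < qseq m j
  | 0 | 1 => Nat.one_pos
  | l + 2 => by rw [qseq_add_two]; have := qseq_pos m l; positivity

lemma one_le_maxDigit {m : ℕ} (hm : 1 ≤ m) (i : ℕ) : 1 ≤ maxDigit m i := by
  unfold maxDigit; split_ifs <;> omega

lemma qseq_monotone {m : ℕ} (hm : 1 ≤ m) : Monotone (qseq m) := by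
  refine monotone_nat_of_le_succ fun j => ?_
  rcases j with _ | l
  · rfl
  · rw [qseq_add_two]
    nlinarith [one_le_maxDigit hm (l + 1)]

namespace IsAdmissible

variable {m : ℕ} {c c' : ℕ →₀ ℕ}

lemma sum_range_lt_qseq (hc : IsAdmissible m c) : ∀ j, ∑ i ∈ range j, c i * qseq m i < qseq m j
  | 0 => Nat.one_pos
  | 1 => by simp [qseq, hc.apply_zero]
  | l + 2 => by
    have ih := hc.sum_range_lt_qseq l
    have ih1 := hc.sum_range_lt_qseq (l + 1)
    rw [qseq_add_two, sum_range_succ]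
    by_cases hmax : c (l + 1) = maxDigit m (l + 1)
    · have h0 : c l = 0 := hc.apply_pred_eq_zero (l + 1) (by omega) hmax
      rw [sum_range_succ, h0, hmax]
      omega
    · have : c (l + 1) + 1 ≤ maxDigit m (l + 1) := lt_of_le_of_ne (hc.le_maxDigit _) hmax
      nlinarith [qseq_pos m l]

lemma sum_range_lt_qseq_pred (hc : IsAdmissible m c) {k : ℕ} (hk : c k = maxDigit m k) :
    ∑ i ∈ range k, c i * qseq m i < qseq m (k - 1) := by
  rcases k with _ | k
  · exact Nat.one_pos
  · have h0 : c k = 0 := hc.apply_pred_eq_zero (k + 1) (by omega) hk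
    rw [sum_range_succ, h0, zero_mul, add_zero]
    exact hc.sum_range_lt_qseq k

lemma apply_le_of_sum_range_succ_le (hc : IsAdmissible m c) {K : ℕ}
    (h : ∑ i ∈ range (K + 1), c' i * qseq m i ≤ ∑ i ∈ range (K + 1), c i * qseq m i) :
    c' K ≤ c K := by
  by_contra! hlt
  rw [sum_range_succ, sum_range_succ] at h
  have hstep : c K * qseq m K + qseq m K ≤ c' K * qseq m K := by
    simpa [add_mul] using Nat.mul_le_mul_right (qseq m K) hlt
  have := hc.sum_range_lt_qseq K
  omega

lemma apply_eq_of_sum_range_eq (hc : IsAdmissible m c) (hc' : IsAdmissible m c') :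
    ∀ K, ∑ i ∈ range K, c i * qseq m i = ∑ i ∈ range K, c' i * qseq m i → ∀ i < K, c i = c' i
  | 0, _, _, hi => absurd hi (Nat.not_lt_zero _)
  | K + 1, h, i, hi => by
    have htop : c K = c' K :=
      le_antisymm (hc'.apply_le_of_sum_range_succ_le h.le) (hc.apply_le_of_sum_range_succ_le h.ge)
    rcases (Nat.lt_succ_iff.1 hi).lt_or_eq with hi | rfl
    · refine apply_eq_of_sum_range_eq hc hc' K ?_ i hi
      rw [sum_range_succ, sum_range_succ, htop] at h
      omega
    · exact htop

lemma eq_of_weight_eq (hc : IsAdmissible m c) (hc' : IsAdmissible m c')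
    (h : weight (qseq m) c = weight (qseq m) c') : c = c' := by
  obtain ⟨K, hK⟩ := exists_nat_subset_range (c.support ∪ c'.support)
  have hvanish : ∀ d : ℕ →₀ ℕ, d.support ⊆ range K → d.filter (K ≤ ·) = 0 := fun d hd =>
    (filter_eq_zero_iff _ _).2 fun i hi => by
      by_contra hne
      have := hd (mem_support_iff.2 hne)
      simp only [mem_range] at this
      omega
  have hsub := union_subset_iff.1 hK
  rw [weight_eq_sum_range_add_weight_filter _ c K, weight_eq_sum_range_add_weight_filter _ c' K,
    hvanish c hsub.1, hvanish c' hsub.2, map_zero, add_zero, add_zero] at h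
  ext i
  by_cases hi : i < K
  · exact hc.apply_eq_of_sum_range_eq hc' K h i hi
  · rw [← filter_apply_pos (K ≤ ·) c (not_lt.1 hi), ← filter_apply_pos (K ≤ ·) c' (not_lt.1 hi),
      hvanish c hsub.1, hvanish c' hsub.2]

end IsAdmissible

lemma isAdmissible_zero (m : ℕ) : IsAdmissible m 0 :=
  ⟨rfl, fun _ => Nat.zero_le _, fun _ _ _ => rfl⟩

def highDigits (b : ℕ → ℕ →₀ ℕ) (k n : ℕ) : ℕ →₀ ℕ := (b n).filter (k ≤ ·)

def highPart (m : ℕ) (b : ℕ → ℕ →₀ ℕ) (k n : ℕ) : ℕ := weight (qseq m) (highDigits b k n)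

end Ostrowski

namespace IsOstrowskiDigits

open Ostrowski

variable {m : ℕ} {b : ℕ → ℕ →₀ ℕ}

lemma isAdmissible (hb : IsOstrowskiDigits m b) (n : ℕ) : IsAdmissible m (b n) where
  apply_zero := hb.2.1 n
  le_maxDigit i := by
    unfold maxDigit
    split_ifs with h
    · exact hb.2.2.1 n i h
    · exact hb.2.2.2.1 n i (by omega)
  apply_pred_eq_zero := hb.2.2.2.2 n

lemma weight_eq (hb : IsOstrowskiDigits m b) (n : ℕ) : weight (qseq m) (b n) = n := by
  simpa [Finsupp.weight_apply] using hb.1 n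

lemma apply_weight (hb : IsOstrowskiDigits m b) {c : ℕ →₀ ℕ} (hc : IsAdmissible m c) :
    b (weight (qseq m) c) = c :=
  (hb.isAdmissible _).eq_of_weight_eq hc (hb.weight_eq _)

lemma apply_zero (hb : IsOstrowskiDigits m b) : b 0 = 0 := by
  simpa using hb.apply_weight (isAdmissible_zero m)

lemma apply_eq_zero_of_lt_qseq (hb : IsOstrowskiDigits m b) (hm : 1 ≤ m) {n K i : ℕ}
    (hn : n < qseq m K) (hi : K ≤ i) : b n i = 0 := by
  by_contra h
  have := le_weight_of_ne_zero' (qseq m) h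
  rw [hb.weight_eq] at this
  have := qseq_monotone hm hi
  omega

lemma sum_range_add_highPart (hb : IsOstrowskiDigits m b) (k n : ℕ) :
    ∑ i ∈ range k, b n i * qseq m i + highPart m b k n = n := by
  rw [highPart, highDigits, ← weight_eq_sum_range_add_weight_filter, hb.weight_eq]

lemma highPart_le (hb : IsOstrowskiDigits m b) (k n : ℕ) : highPart m b k n ≤ n := by
  have := hb.sum_range_add_highPart k n
  omega

lemma isAdmissible_add_highDigits (hb : IsOstrowskiDigits m b) {k d n : ℕ}
    (hd : ∀ i, k ≤ i → b d i = 0) (hjunc : b n k = maxDigit m k → b d (k - 1) = 0) :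
    IsAdmissible m (b d + highDigits b k n) := by
  have happly : ∀ i, (b d + highDigits b k n) i = if k ≤ i then b n i else b d i := by
    intro i
    simp only [Finsupp.add_apply, highDigits, filter_apply]
    split_ifs with h
    · rw [hd i h, zero_add]
    · rw [add_zero]
  refine ⟨?_, fun i => ?_, fun i hi hmax => ?_⟩
  · rw [happly]; split_ifs <;> exact (hb.isAdmissible _).apply_zero
  · rw [happly]; split_ifs <;> exact (hb.isAdmissible _).le_maxDigit i
  · rw [happly] at hmax ⊢
    rcases lt_trichotomy i k with hik | rfl | hik
    · rw [if_neg (by omega)] at hmax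
      rw [if_neg (by omega)]
      exact (hb.isAdmissible d).apply_pred_eq_zero i hi hmax
    · rw [if_pos le_rfl] at hmax
      rw [if_neg (by omega)]
      exact hjunc hmax
    · rw [if_pos hik.le] at hmax
      rw [if_pos (by omega)]
      exact (hb.isAdmissible n).apply_pred_eq_zero i hi hmax

lemma apply_add_highPart (hb : IsOstrowskiDigits m b) {k d n : ℕ}
    (hd : ∀ i, k ≤ i → b d i = 0) (hjunc : b n k = maxDigit m k → b d (k - 1) = 0) :
    b (d + highPart m b k n) = b d + highDigits b k n := by
  rw [← hb.apply_weight (hb.isAdmissible_add_highDigits hd hjunc), map_add, hb.weight_eq]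
  rfl

lemma apply_highPart (hb : IsOstrowskiDigits m b) (k n : ℕ) :
    b (highPart m b k n) = highDigits b k n := by
  simpa [hb.apply_zero] using
    hb.apply_add_highPart (d := 0) (n := n) (fun i _ => by rw [hb.apply_zero]; rfl)
      (fun _ => by rw [hb.apply_zero]; rfl)

lemma highDigits_add_highPart (hb : IsOstrowskiDigits m b) {k d n : ℕ}
    (hd : ∀ i, k ≤ i → b d i = 0) (hjunc : b n k = maxDigit m k → b d (k - 1) = 0) :
    highDigits b k (d + highPart m b k n) = highDigits b k n := by
  ext i
  simp only [highDigits, hb.apply_add_highPart hd hjunc, filter_apply, Finsupp.add_apply]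
  split_ifs with h
  · rw [hd i h, zero_add]
  · rfl

lemma highPart_add_highPart (hb : IsOstrowskiDigits m b) {k d n : ℕ}
    (hd : ∀ i, k ≤ i → b d i = 0) (hjunc : b n k = maxDigit m k → b d (k - 1) = 0) :
    highPart m b k (d + highPart m b k n) = highPart m b k n :=
  congrArg (weight (qseq m)) (hb.highDigits_add_highPart hd hjunc)

lemma highPart_highPart (hb : IsOstrowskiDigits m b) (k n : ℕ) :
    highPart m b k (highPart m b k n) = highPart m b k n := by
  simpa using hb.highPart_add_highPart (d := 0) (n := n) (k := k)
    (fun i _ => by rw [hb.apply_zero]; rfl) (fun _ => by rw [hb.apply_zero]; rfl)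

lemma highPart_eq_of_le (hb : IsOstrowskiDigits m b) (hm : 1 ≤ m) {k a n : ℕ}
    (h₁ : highPart m b k n ≤ a) (h₂ : a ≤ n) : highPart m b k a = highPart m b k n := by
  obtain ⟨d, rfl⟩ := Nat.exists_eq_add_of_le' h₁
  have hlow := hb.sum_range_add_highPart k n
  by_cases hmax : b n k = maxDigit m k
  · have := (hb.isAdmissible n).sum_range_lt_qseq_pred hmax
    exact hb.highPart_add_highPart
      (fun i hi => hb.apply_eq_zero_of_lt_qseq hm (by omega : d < qseq m (k - 1)) (by omega))
      (fun _ => hb.apply_eq_zero_of_lt_qseq hm (by omega) le_rfl)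
  · have := (hb.isAdmissible n).sum_range_lt_qseq k
    exact hb.highPart_add_highPart
      (fun i hi => hb.apply_eq_zero_of_lt_qseq hm (by omega : d < qseq m k) hi) (absurd · hmax)

lemma add_qseq_le_of_highPart_eq_self (hb : IsOstrowskiDigits m b) (hm : 1 ≤ m) {k t t' : ℕ}
    (ht : highPart m b k t = t) (ht' : highPart m b k t' = t') (hlt : t < t') :
    t + qseq m (k - 1) ≤ t' := by
  by_contra! h
  have hd : t' - t < qseq m (k - 1) := by omega
  have := hb.highPart_add_highPart (d := t' - t) (n := t)
    (fun i hi => hb.apply_eq_zero_of_lt_qseq hm hd (by omega))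
    (fun _ => hb.apply_eq_zero_of_lt_qseq hm hd le_rfl)
  rw [ht, Nat.sub_add_cancel hlt.le, ht'] at this
  omega

lemma exists_highPart_eq_self_of_ne (hb : IsOstrowskiDigits m b) (hm : 1 ≤ m) {k n r : ℕ}
    (h : highPart m b k (n + r) ≠ highPart m b k n) :
    ∃ t, highPart m b k t = t ∧ n < t ∧ t ≤ n + r := by
  refine ⟨highPart m b k (n + r), hb.highPart_highPart k _, ?_, hb.highPart_le k _⟩
  by_contra! hle
  exact h (hb.highPart_eq_of_le hm hle (by omega)).symm

end IsOstrowskiDigits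

open Ostrowski

lemma Sα_eq_Sαk_add_degree (b : ℕ → ℕ →₀ ℕ) (k n : ℕ) :
    Sα b n = Sαk b k n + degree (highDigits b k n) := by
  rw [show Sα b n = degree (b n) from rfl, degree_eq_weight_one,
    weight_eq_sum_range_add_weight_filter _ _ k]
  simp [Sαk, highDigits]

lemma e_mul_conj_e (x y : ℝ) : e x * starRingEnd ℂ (e y) = e (x - y) := by
  simp only [e, ← Complex.exp_conj, map_mul, Complex.conj_I, Complex.conj_ofReal, map_ofNat,
    ← Complex.exp_add]
  push_cast
  ring_nf

lemma card_Ico_inter_range_mul_le {t r Q N : ℕ} (hQt : Q ≤ t) (hrQ : r ≤ Q) :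
    #(Ico (t - r) t ∩ range N) * Q ≤ r * #(Ico (t - Q) t ∩ range N) := by
  rw [range_eq_Ico, Ico_inter_Ico, Ico_inter_Ico, Nat.card_Ico, Nat.card_Ico,
    max_eq_left (Nat.zero_le _), max_eq_left (Nat.zero_le _)]
  have hx : min t N ≤ t := min_le_left t N
  generalize min t N = x at hx ⊢
  rcases le_total x (t - r) with h | h
  · simp [Nat.sub_eq_zero_of_le h]
  · obtain ⟨s, rfl⟩ := Nat.exists_eq_add_of_le hx
    have e₁ : x - (x + s - r) = r - s := by omega
    have e₂ : x - (x + s - Q) = Q - s := by omega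
    rw [e₁, e₂, Nat.sub_mul, Nat.mul_sub]
    exact Nat.sub_le_sub_left ((mul_comm r s).trans_le (Nat.mul_le_mul_left s hrQ)) _

-- Each such `n` lies in a window `[t - r, t)` with `P t`; the longer windows `[t - Q, t)` are
-- disjoint and contain at least `Q / r` times as many points below `N`.
theorem card_mul_le_of_forall_exists_Ioc {P : ℕ → Prop} {Q N r : ℕ} (h₀ : P 0)
    (hsep : ∀ t t', P t → P t' → t < t' → t + Q ≤ t') {s : Finset ℕ}
    (hs : ∀ n ∈ s, n < N ∧ ∃ t, P t ∧ n < t ∧ t ≤ n + r) : #s * Q ≤ N * r := by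
  classical
  have hsN : #s ≤ N := (card_le_card fun n hn => mem_range.2 (hs n hn).1).trans (card_range N).le
  rcases le_or_gt Q r with hQr | hrQ
  · exact Nat.mul_le_mul hsN hQr
  set T := (Ioo 0 (N + r)).filter P
  have hTQ : ∀ t ∈ T, Q ≤ t := fun t ht => by
    simp only [T, mem_filter, mem_Ioo] at ht
    simpa using hsep 0 t h₀ ht.2 ht.1.1
  have hcover : s ⊆ T.biUnion fun t => Ico (t - r) t ∩ range N := by
    intro n hn
    obtain ⟨hnN, t, hPt, hnt, htr⟩ := hs n hn
    simp only [T, mem_biUnion, mem_filter, mem_Ioo, mem_inter, mem_Ico, mem_range]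
    exact ⟨t, ⟨⟨by omega, by omega⟩, hPt⟩, ⟨by omega, hnt⟩, hnN⟩
  have hdisj : (T : Set ℕ).PairwiseDisjoint fun t => Ico (t - Q) t ∩ range N := by
    intro t ht t' ht' hne
    simp only [T, coe_filter, mem_Ioo] at ht ht'
    refine disjoint_left.2 fun n hn hn' => ?_
    simp only [mem_inter, mem_Ico] at hn hn'
    rcases lt_or_gt_of_ne hne with h | h
    · have := hsep t t' ht.2 ht'.2 h; omega
    · have := hsep t' t ht'.2 ht.2 h; omega
  calc #s * Q ≤ (∑ t ∈ T, #(Ico (t - r) t ∩ range N)) * Q :=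
        Nat.mul_le_mul_right _ ((card_le_card hcover).trans card_biUnion_le)
    _ ≤ ∑ t ∈ T, r * #(Ico (t - Q) t ∩ range N) := by
        rw [Finset.sum_mul]
        exact sum_le_sum fun t ht => card_Ico_inter_range_mul_le (hTQ t ht) hrQ.le
    _ = r * #(T.biUnion fun t => Ico (t - Q) t ∩ range N) := by
        rw [card_biUnion hdisj, Finset.mul_sum]
    _ ≤ r * N := Nat.mul_le_mul_left _
        ((card_le_card (biUnion_subset.2 fun _ _ => inter_subset_right)).trans (card_range N).le)
    _ = N * r := mul_comm _ _

theorem truncation_ostrowski_general (m : ℕ) (hm : 2 ≤ m)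
    (b : ℕ → ℕ →₀ ℕ) (hb : IsOstrowskiDigits m b)
    (N r : ℕ) (k : ℕ) (γ : ℝ) :
    (((Finset.range N).filter fun n =>
        e (γ * Sα b (n + r)) * (starRingEnd ℂ) (e (γ * Sα b n)) ≠
          e (γ * Sαk b k (n + r)) * (starRingEnd ℂ) (e (γ * Sαk b k n))).card : ℝ) ≤
      (N : ℝ) * r / qseq m (k - 1) := by
  have hm₁ : 1 ≤ m := by omega
  rw [le_div_iff₀ (by exact_mod_cast qseq_pos m (k - 1))]
  norm_cast
  refine card_mul_le_of_forall_exists_Ioc (P := fun t => highPart m b k t = t)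
    (Nat.le_zero.1 (hb.highPart_le k 0)) (fun _ _ => hb.add_qseq_le_of_highPart_eq_self hm₁) ?_
  intro n hn
  rw [mem_filter, mem_range] at hn
  refine ⟨hn.1, hb.exists_highPart_eq_self_of_ne hm₁ fun h => hn.2 ?_⟩
  have hdigits : highDigits b k (n + r) = highDigits b k n := by
    rw [← hb.apply_highPart, h, hb.apply_highPart]
  rw [e_mul_conj_e, e_mul_conj_e, Sα_eq_Sαk_add_degree b k, Sα_eq_Sαk_add_degree b k n, hdigits]
  congr 1
  push_cast
  ring

/-- Truncation lemma for the Ostrowski sum of digits. -/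
theorem truncation_ostrowski (m : ℕ) (hm : 2 ≤ m)
    (b : ℕ → ℕ →₀ ℕ) (hb : IsOstrowskiDigits m b)
    (N r : ℕ) (k : ℕ) (hk : 2 ≤ k) (γ : ℝ) :
    (((Finset.range N).filter fun n =>
        e (γ * Sα b (n + r)) * (starRingEnd ℂ) (e (γ * Sα b n)) ≠
          e (γ * Sαk b k (n + r)) * (starRingEnd ℂ) (e (γ * Sαk b k n))).card : ℝ) ≤
      (N : ℝ) * r / qseq m (k - 1) :=
  truncation_ostrowski_general m hm b hb N r k γ

end
end

section
/- Let q, m₁, k₁ be positive integers with q ≥ 2, m₁ ≥ 2, 1 ≤ k₁ < m₁, and gcd(m₁, q − 1) = 1. Then there exist δ₁ > 0 and C > 0 such that for every real number a and every positive integer N, |∑_{0≤n<N} e(a n + (k₁/m₁) S_q(n))| ≤ C · N^{1−δ₁}. -/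
/-!
Gel'fond's recursion. Writing `n = q m + d` with `d < q` gives `S_q(n) = d + S_q(m)`, so the sum
`T(a, N) = ∑_{n<N} e(a n + α S_q(n))` over a full block `N = q M` factors as
`(∑_{d<q} e((a + α) d)) · T(q a, M)`. The factor has modulus at most `q`, with equality only when
`a + α ∈ ℤ`. As `(q - 1) α = q (a + α) - (q a + α)` is not an integer when `α = k₁/m₁`, two
consecutive factors never both have modulus `q`; their product is a continuous 1-periodic function
of `a`, hence bounded by some `B < q²`. Iterating the two-step recursion
`|T(a, N)| ≤ B |T(q² a, ⌊N/q²⌋)| + q² + q` gives `|T(a, N)| ≪ N^θ` for any `θ < 1` with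
`B < q^{2θ}`.
-/

noncomputable section

/-- Sum of digits of `n` in base `q`. -/
def Sq (q n : ℕ) : ℕ := (Nat.digits q n).sum

open Finset FourierTransform

lemma e_eq_fourierChar (x : ℝ) : e x = 𝐞 x := by
  rw [e, Real.fourierChar_apply]
  push_cast
  ring_nf

lemma e_add (x y : ℝ) : e (x + y) = e x * e y := by
  simp only [e_eq_fourierChar, AddChar.map_add_eq_mul, Circle.coe_mul]

lemma e_mul_natCast (x : ℝ) (d : ℕ) : e (x * d) = e x ^ d := by
  rw [e_eq_fourierChar, e_eq_fourierChar, mul_comm, ← nsmul_eq_mul, AddChar.map_nsmul_eq_pow,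
    Circle.coe_pow]

lemma norm_e (x : ℝ) : ‖e x‖ = 1 := by
  rw [e_eq_fourierChar, Circle.norm_coe]

lemma e_eq_one_iff {x : ℝ} : e x = 1 ↔ ∃ n : ℤ, x = n := by
  rw [e_eq_fourierChar, Circle.coe_eq_one, Real.fourierChar_apply', Circle.exp_eq_one]
  simp only [mul_comm _ (2 * Real.pi), mul_right_inj' Real.two_pi_pos.ne']

lemma e_periodic : Function.Periodic e 1 := fun x => by
  rw [e_add, e_eq_one_iff.mpr ⟨1, Int.cast_one.symm⟩, mul_one]

lemma continuous_e : Continuous e := by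
  unfold e
  fun_prop

lemma Sq_add_mul {q : ℕ} (hq : 2 ≤ q) {d : ℕ} (hd : d < q) (m : ℕ) :
    Sq q (d + q * m) = d + Sq q m := by
  by_cases h : d = 0 ∧ m = 0
  · simp [h.1, h.2, Sq]
  · rw [Sq, Nat.digits_add q hq d m hd (by tauto), List.sum_cons, Sq]

lemma sum_range_mul_eq_sum_sum {M : Type*} [AddCommMonoid M] (f : ℕ → M) (q K : ℕ) :
    ∑ n ∈ range (q * K), f n = ∑ m ∈ range K, ∑ d ∈ range q, f (q * m + d) := by
  induction K with
  | zero => simp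
  | succ K ih => rw [mul_add_one, sum_range_add, ih, sum_range_succ]

lemma norm_geom_sum_le {z : ℂ} (hz : ‖z‖ = 1) (q : ℕ) : ‖∑ d ∈ range q, z ^ d‖ ≤ q := by
  simpa [hz] using norm_sum_le (range q) (z ^ ·)

lemma norm_geom_sum_lt {z : ℂ} (hz : ‖z‖ = 1) (hz₁ : z ≠ 1) {q : ℕ} (hq : 2 ≤ q) :
    ‖∑ d ∈ range q, z ^ d‖ < q := by
  obtain ⟨p, rfl⟩ := Nat.exists_eq_add_of_le' hq
  have h₁ : ‖z + 1‖ < 2 := by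
    refine (norm_add_le z 1).trans_eq (by norm_num [hz]) |>.lt_of_ne fun h => hz₁ ?_
    exact eq_of_norm_eq_of_norm_add_eq (by simp [hz]) (h.trans (by norm_num [hz]))
  have h₂ : ‖∑ d ∈ range p, z ^ (d + 2)‖ ≤ p := by
    simpa [hz] using norm_sum_le (range p) (fun d => z ^ (d + 2))
  rw [sum_range_succ', sum_range_succ', pow_one, pow_zero, add_assoc]
  push_cast
  linarith [norm_add_le (∑ d ∈ range p, z ^ (d + 2)) (z + 1)]

def digitFactor (q : ℕ) (x : ℝ) : ℝ := ‖∑ d ∈ range q, e x ^ d‖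

lemma digitFactor_nonneg (q : ℕ) (x : ℝ) : 0 ≤ digitFactor q x := norm_nonneg _

lemma digitFactor_le (q : ℕ) (x : ℝ) : digitFactor q x ≤ q := norm_geom_sum_le (norm_e x) q

lemma digitFactor_lt {q : ℕ} (hq : 2 ≤ q) {x : ℝ} (hx : ∀ n : ℤ, x ≠ n) : digitFactor q x < q :=
  norm_geom_sum_lt (norm_e x) (fun h => by obtain ⟨n, hn⟩ := e_eq_one_iff.mp h; exact hx n hn) hq

lemma digitFactor_periodic (q : ℕ) : Function.Periodic (digitFactor q) 1 := fun x => by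
  rw [digitFactor, digitFactor, e_periodic x]

lemma continuous_digitFactor (q : ℕ) : Continuous (digitFactor q) := by
  unfold digitFactor
  have := continuous_e
  fun_prop

def digitExpSum (q : ℕ) (α a : ℝ) (N : ℕ) : ℂ := ∑ n ∈ range N, e (a * n + α * Sq q n)

lemma digitExpSum_base_mul {q : ℕ} (hq : 2 ≤ q) (α a : ℝ) (K : ℕ) :
    digitExpSum q α a (q * K) = (∑ d ∈ range q, e (a + α) ^ d) * digitExpSum q α (q * a) K := by
  rw [digitExpSum, sum_range_mul_eq_sum_sum, digitExpSum, sum_mul_sum, sum_comm]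
  refine sum_congr rfl fun d hd => sum_congr rfl fun m _ => ?_
  rw [add_comm (q * m) d, Sq_add_mul hq (mem_range.mp hd), ← e_mul_natCast, ← e_add]
  congr 1
  push_cast
  ring

lemma norm_digitExpSum_le {q : ℕ} (hq : 2 ≤ q) (α a : ℝ) (N : ℕ) :
    ‖digitExpSum q α a N‖ ≤ digitFactor q (a + α) * ‖digitExpSum q α (q * a) (N / q)‖ + q := by
  have htail : ‖∑ n ∈ Ico (q * (N / q)) N, e (a * n + α * Sq q n)‖ ≤ q := by
    refine (norm_sum_le _ _).trans ?_
    have hdecomp := Nat.mod_add_div N q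
    have hmod := Nat.mod_lt N (by omega : 0 < q)
    simp only [norm_e, sum_const, Nat.card_Ico, nsmul_eq_mul, mul_one, Nat.cast_le]
    omega
  rw [digitExpSum, ← sum_range_add_sum_Ico _ (Nat.mul_div_le N q), ← digitExpSum,
    digitExpSum_base_mul hq, digitFactor, ← norm_mul]
  exact (norm_add_le _ _).trans (add_le_add_right htail _)

lemma norm_digitExpSum_le_two_step {q : ℕ} (hq : 2 ≤ q) (α a : ℝ) (N : ℕ) :
    ‖digitExpSum q α a N‖ ≤ digitFactor q (a + α) * digitFactor q (q * a + α) *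
      ‖digitExpSum q α (q ^ 2 * a) (N / q ^ 2)‖ + (q ^ 2 + q) := by
  have h₁ := norm_digitExpSum_le hq α a N
  have h₂ := norm_digitExpSum_le hq α (q * a) (N / q)
  rw [Nat.div_div_eq_div_mul, ← mul_assoc, ← sq, ← sq] at h₂
  have h₃ := mul_le_mul_of_nonneg_left h₂ (digitFactor_nonneg q (a + α))
  have h₄ := mul_le_mul_of_nonneg_right (digitFactor_le q (a + α)) (Nat.cast_nonneg q)
  linarith

lemma natCast_mul_div_ne_intCast {c k m : ℕ} (hcop : m.Coprime c) (hk₀ : 0 < k) (hkm : k < m)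
    (n : ℤ) : (c : ℝ) * (k / m) ≠ n := by
  intro h
  have hm : (m : ℝ) ≠ 0 := by exact_mod_cast (by omega : m ≠ 0)
  have hℤ : ((c * k : ℕ) : ℤ) = n * m := by
    have : (c : ℝ) * k = n * m := by field_simp at h; linarith
    exact_mod_cast this
  have hdvd : m ∣ c * k := Int.natCast_dvd_natCast.mp ⟨n, by rw [hℤ]; ring⟩
  exact Nat.not_dvd_of_pos_of_lt hk₀ hkm (hcop.dvd_of_dvd_mul_left hdvd)

lemma digitFactor_mul_digitFactor_lt {q : ℕ} (hq : 2 ≤ q) {α : ℝ}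
    (hα : ∀ n : ℤ, ((q : ℝ) - 1) * α ≠ n) (t : ℝ) :
    digitFactor q (t + α) * digitFactor q (q * t + α) < q ^ 2 := by
  have h₁ := digitFactor_nonneg q (t + α)
  have h₂ := digitFactor_nonneg q (q * t + α)
  have h₁q := digitFactor_le q (t + α)
  have h₂q := digitFactor_le q (q * t + α)
  by_cases h : ∃ n : ℤ, t + α = n
  · obtain ⟨n, hn⟩ := h
    have h₂lt : digitFactor q (q * t + α) < q := digitFactor_lt hq fun n' hn' =>
      hα (q * n - n') (by push_cast; linear_combination (q : ℝ) * hn - hn')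
    nlinarith
  · have h₁lt : digitFactor q (t + α) < q := digitFactor_lt hq (not_exists.mp h)
    nlinarith

lemma Function.Periodic.exists_lt_forall_le {f : ℝ → ℝ} {c M : ℝ} (hf : Function.Periodic f c)
    (hc : c ≠ 0) (hcont : Continuous f) (hlt : ∀ t, f t < M) : ∃ B < M, ∀ t, f t ≤ B := by
  obtain ⟨_, ⟨t₀, rfl⟩, hmax⟩ :=
    (hf.compact_of_continuous hc hcont).exists_isGreatest (Set.range_nonempty f)
  exact ⟨f t₀, hlt t₀, fun t => hmax ⟨t, rfl⟩⟩

lemma exists_lt_sq_forall_digitFactor_mul_digitFactor_le {q : ℕ} (hq : 2 ≤ q) {α : ℝ}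
    (hα : ∀ n : ℤ, ((q : ℝ) - 1) * α ≠ n) :
    ∃ B < (q : ℝ) ^ 2, ∀ t, digitFactor q (t + α) * digitFactor q (q * t + α) ≤ B := by
  have hperiodic : Function.Periodic (digitFactor q) q := by
    simpa using (digitFactor_periodic q).nat_mul q
  refine Function.Periodic.exists_lt_forall_le (c := 1) (fun t => ?_) one_ne_zero
    (by have := continuous_digitFactor q; fun_prop) (digitFactor_mul_digitFactor_lt hq hα)
  rw [add_right_comm, digitFactor_periodic, mul_add_one, add_right_comm, hperiodic]

open Filter Topology in
lemma exists_lt_rpow_of_lt {Q B : ℝ} (hQ : 0 < Q) (hB : B < Q) :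
    ∃ θ ∈ Set.Ioo (0 : ℝ) 1, B < Q ^ θ := by
  have h : ∀ᶠ θ in 𝓝[<] (1 : ℝ), B < Q ^ θ :=
    ((Real.continuousAt_const_rpow hQ.ne').tendsto.mono_left nhdsWithin_le_nhds).eventually
      (lt_mem_nhds (by simpa using hB))
  exact (Filter.Eventually.and (Ioo_mem_nhdsLT one_pos) h).exists

lemma exists_le_mul_rpow_of_le_mul_div_add {ι : Type*} {F : ι → ℕ → ℝ} {φ : ι → ι} {Q : ℕ}
    {B K θ : ℝ} (hQ : 1 < Q) (hB : 0 ≤ B) (hK : 0 < K) (hθ : 0 < θ) (hBQ : B < (Q : ℝ) ^ θ)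
    (hF₀ : ∀ i, F i 0 ≤ 0) (hF : ∀ i N, F i N ≤ B * F (φ i) (N / Q) + K) :
    ∃ C > 0, ∀ i N, F i N ≤ C * (N : ℝ) ^ θ := by
  have hQθ : 0 < (Q : ℝ) ^ θ := by positivity
  have hr : 0 < 1 - B / (Q : ℝ) ^ θ := by rw [sub_pos, div_lt_one hQθ]; exact hBQ
  set C := K / (1 - B / (Q : ℝ) ^ θ) with hC
  have hC₀ : 0 < C := div_pos hK hr
  have hKC : K = C * (1 - B / (Q : ℝ) ^ θ) := by rw [hC, div_mul_cancel₀ _ hr.ne']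
  refine ⟨C, hC₀, fun i N => ?_⟩
  induction N using Nat.strong_induction_on generalizing i with
  | _ N ih =>
  rcases N.eq_zero_or_pos with rfl | hN
  · simpa [Real.zero_rpow hθ.ne'] using hF₀ i
  have hdiv : ((N / Q : ℕ) : ℝ) ^ θ ≤ (N : ℝ) ^ θ / (Q : ℝ) ^ θ := by
    rw [← Real.div_rpow (by positivity) (by positivity)]
    exact Real.rpow_le_rpow (by positivity) Nat.cast_div_le hθ.le
  have hNθ : 1 ≤ (N : ℝ) ^ θ := Real.one_le_rpow (by exact_mod_cast hN) hθ.le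
  calc F i N ≤ B * F (φ i) (N / Q) + K := hF i N
    _ ≤ B * (C * ((N / Q : ℕ) : ℝ) ^ θ) + K := by
        gcongr; exact ih _ (Nat.div_lt_self hN hQ) _
    _ ≤ B * (C * ((N : ℝ) ^ θ / (Q : ℝ) ^ θ)) + K * (N : ℝ) ^ θ := by
        gcongr; exact le_mul_of_one_le_right hK.le hNθ
    _ = C * (N : ℝ) ^ θ := by rw [hKC]; field_simp; ring

theorem gelfond_estimate_general (q m₁ k₁ : ℕ) (hq : 2 ≤ q)
    (hk₁ : 1 ≤ k₁) (hk₁' : k₁ < m₁) (hgcd : Nat.gcd m₁ (q - 1) = 1) :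
    ∃ δ₁ > (0 : ℝ), ∃ C > (0 : ℝ), ∀ a : ℝ, ∀ N : ℕ, 0 < N →
      ‖(∑ n ∈ Finset.range N,
          e (a * n + ((k₁ : ℝ) / m₁) * Sq q n))‖ ≤ C * (N : ℝ) ^ (1 - δ₁) := by
  set α : ℝ := k₁ / m₁
  have hα : ∀ n : ℤ, ((q : ℝ) - 1) * α ≠ n := by
    simpa [Nat.cast_sub (by omega : 1 ≤ q)] using natCast_mul_div_ne_intCast hgcd hk₁ hk₁'
  obtain ⟨B, hBq, hB⟩ := exists_lt_sq_forall_digitFactor_mul_digitFactor_le hq hα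
  have hB₀ : 0 ≤ B := (mul_nonneg (digitFactor_nonneg _ _) (digitFactor_nonneg _ _)).trans (hB 0)
  obtain ⟨θ, ⟨hθ₀, hθ₁⟩, hBθ⟩ := exists_lt_rpow_of_lt (by positivity : (0 : ℝ) < q ^ 2) hBq
  obtain ⟨C, hC, hT⟩ := exists_le_mul_rpow_of_le_mul_div_add
    (F := fun a N => ‖digitExpSum q α a N‖) (φ := (q ^ 2 * ·)) (Q := q ^ 2) (K := q ^ 2 + q)
    (by nlinarith) hB₀ (by positivity) hθ₀ (by exact_mod_cast hBθ) (by simp [digitExpSum])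
    (fun a N => (norm_digitExpSum_le_two_step hq α a N).trans (by gcongr; exact hB a))
  refine ⟨1 - θ, by linarith, C, hC, fun a N _ => ?_⟩
  rw [sub_sub_cancel]
  exact hT a N

/-- **Gel'fond's estimate.** -/
theorem gelfond_estimate (q m₁ k₁ : ℕ) (hq : 2 ≤ q) (hm₁ : 2 ≤ m₁)
    (hk₁ : 1 ≤ k₁) (hk₁' : k₁ < m₁) (hgcd : Nat.gcd m₁ (q - 1) = 1) :
    ∃ δ₁ > (0 : ℝ), ∃ C > (0 : ℝ), ∀ a : ℝ, ∀ N : ℕ, 0 < N →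
      ‖(∑ n ∈ Finset.range N,
          e (a * n + ((k₁ : ℝ) / m₁) * Sq q n))‖ ≤ C * (N : ℝ) ^ (1 - δ₁) :=
  gelfond_estimate_general q m₁ k₁ hq hk₁ hk₁' hgcd

end
end
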